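/- arXiv:1908.10646 — 3 statements merged into one kernel-verified Lean document; each statement's English description precedes it below -/
import Mathlib

section
/- Let Y be a non-negative random variable and suppose that for all c, d > 0, P(Y > c) ≤ (1/c)·E[Z ∧ d] + P(Z ≥ d) for a non-negative random variable Z. Then for every p ∈ (0,1), E[Y^p] ≤ (p^{-p}/(1-p))·E[Z^p]. -/
/-!
By the layer-cake formula, `E[Y^p] = ∫₀^∞ p t^(p-1) P(Y > t) dt`. Apply the hypothesis with
`(c, d) = (t, p t)` and exchange the order of integration in each of the two resulting terms.
The tail term is `∫₀^∞ p t^(p-1) P(Z ≥ p t) dt = E[(Z/p)^p] = p^(-p) E[Z^p]`, again by the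
layer-cake formula. In the truncated term the inner integral `∫₀^∞ p t^(p-2) min(z, p t) dt` splits at
`t = z/p` and equals `p^(1-p) z^p / (1-p)`. The constants add up to `p^(-p)/(1-p)`; with `d = λ t`
one gets `λ^(-p) + λ^(1-p)/(1-p)`, which `λ = p` minimises.
-/

open MeasureTheory Set
open scoped ENNReal NNReal

theorem ofReal_inv_mul_ofReal_mul_rpow_sub_one {p t : ℝ} (ht : 0 < t) :
    (ENNReal.ofReal t)⁻¹ * ENNReal.ofReal (p * t ^ (p - 1))
      = ENNReal.ofReal (p * t ^ (p - 2)) := by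
  rw [← ENNReal.ofReal_inv_of_pos ht, ← ENNReal.ofReal_mul (by positivity),
    show p - 1 = (p - 2) + 1 by ring, Real.rpow_add_one ht.ne']
  congr 1
  field_simp

theorem rpow_one_sub_div_add_rpow_neg {p : ℝ} (hp0 : 0 < p) (hp1 : p ≠ 1) :
    p ^ (1 - p) / (1 - p) + p ^ (-p) = p ^ (-p) / (1 - p) := by
  have h1p : 1 - p ≠ 0 := sub_ne_zero.2 hp1.symm
  rw [Real.rpow_sub hp0, Real.rpow_one, Real.rpow_neg hp0.le]
  field_simp
  ring

theorem setLIntegral_Ioc_ofReal_rpow {r b : ℝ} (hr : -1 < r) (hb : 0 ≤ b) :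
    ∫⁻ t in Ioc 0 b, ENNReal.ofReal (t ^ r) = ENNReal.ofReal (b ^ (r + 1) / (r + 1)) := by
  have hint : IntegrableOn (fun t : ℝ => t ^ r) (Ioc 0 b) := by
    have := intervalIntegral.intervalIntegrable_rpow' (a := 0) (b := b) hr
    rwa [intervalIntegrable_iff, uIoc_of_le hb] at this
  rw [← ofReal_integral_eq_lintegral_ofReal hint
    (ae_restrict_of_forall_mem measurableSet_Ioc fun t ht => Real.rpow_nonneg ht.1.le r),
    ← intervalIntegral.integral_of_le hb, integral_rpow (Or.inl hr),
    Real.zero_rpow (by linarith), sub_zero]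

theorem setLIntegral_Ioi_ofReal_rpow {r b : ℝ} (hr : r < -1) (hb : 0 < b) :
    ∫⁻ t in Ioi b, ENNReal.ofReal (t ^ r) = ENNReal.ofReal (-b ^ (r + 1) / (r + 1)) := by
  rw [← ofReal_integral_eq_lintegral_ofReal (integrableOn_Ioi_rpow_of_lt hr hb)
    (ae_restrict_of_forall_mem measurableSet_Ioi fun t ht =>
      Real.rpow_nonneg (hb.trans ht).le r),
    integral_Ioi_rpow_of_lt hr hb]

theorem setLIntegral_Ioi_zero_ofReal_rpow_eq_top (r : ℝ) :
    ∫⁻ t in Ioi 0, ENNReal.ofReal (t ^ r) = ∞ := by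
  by_contra hfin
  refine not_integrableOn_Ioi_rpow r ⟨by fun_prop, ?_⟩
  rw [hasFiniteIntegral_iff_ofReal
    (ae_restrict_of_forall_mem measurableSet_Ioi fun t ht => Real.rpow_nonneg (le_of_lt ht) r)]
  exact lt_top_iff_ne_top.2 hfin

theorem setLIntegral_Ioc_ofReal_mul_rpow_sub_one {p b : ℝ} (hp : 0 < p) (hb : 0 ≤ b) :
    ∫⁻ t in Ioc 0 b, ENNReal.ofReal (p * t ^ (p - 1)) = ENNReal.ofReal (b ^ p) := by
  simp_rw [ENNReal.ofReal_mul hp.le]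
  rw [lintegral_const_mul' _ _ ENNReal.ofReal_ne_top,
    setLIntegral_Ioc_ofReal_rpow (by linarith) hb, ← ENNReal.ofReal_mul hp.le, sub_add_cancel,
    mul_div_cancel₀ _ hp.ne']

theorem setLIntegral_ite_ofReal_lt_eq_rpow {p : ℝ} (hp : 0 < p) (x : ℝ≥0∞) :
    ∫⁻ t in Ioi 0, (if ENNReal.ofReal t < x then ENNReal.ofReal (p * t ^ (p - 1)) else 0)
      = x ^ p := by
  rcases eq_or_ne x ⊤ with rfl | hx
  · simp only [ENNReal.ofReal_lt_top, if_true, ENNReal.ofReal_mul hp.le]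
    rw [lintegral_const_mul' _ _ ENNReal.ofReal_ne_top,
      setLIntegral_Ioi_zero_ofReal_rpow_eq_top, ENNReal.mul_top (ENNReal.ofReal_pos.2 hp).ne',
      ENNReal.top_rpow_of_pos hp]
  lift x to ℝ≥0 using hx
  rw [setLIntegral_congr_fun measurableSet_Ioi
      (g := (Iio (x : ℝ)).indicator fun t => ENNReal.ofReal (p * t ^ (p - 1))) fun t ht => by
        simp [indicator_apply, ← ENNReal.ofReal_coe_nnreal,
          ENNReal.ofReal_lt_ofReal_iff_of_nonneg (le_of_lt ht)],
    lintegral_indicator measurableSet_Iio, Measure.restrict_restrict measurableSet_Iio,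
    Iio_inter_Ioi, setLIntegral_congr Ioo_ae_eq_Ioc,
    setLIntegral_Ioc_ofReal_mul_rpow_sub_one hp x.coe_nonneg, ← ENNReal.ofReal_coe_nnreal,
    ENNReal.ofReal_rpow_of_nonneg x.coe_nonneg hp.le]

theorem setLIntegral_min_ofReal_mul_rpow_sub_two {p b : ℝ} (hp0 : 0 < p) (hp1 : p < 1)
    (hb : 0 < b) :
    ∫⁻ t in Ioi 0, min (ENNReal.ofReal (p * b)) (ENNReal.ofReal (p * t))
        * ENNReal.ofReal (p * t ^ (p - 2))
      = ENNReal.ofReal (p * b ^ p / (1 - p)) := by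
  have h1p : 1 - p ≠ 0 := (sub_pos.2 hp1).ne'
  have hnear : ∫⁻ t in Ioc 0 b, min (ENNReal.ofReal (p * b)) (ENNReal.ofReal (p * t))
      * ENNReal.ofReal (p * t ^ (p - 2)) = ENNReal.ofReal (p * b ^ p) := by
    rw [setLIntegral_congr_fun measurableSet_Ioc
        (g := fun t => ENNReal.ofReal p * ENNReal.ofReal (p * t ^ (p - 1))) fun t ht => ?_,
      lintegral_const_mul' _ _ ENNReal.ofReal_ne_top,
      setLIntegral_Ioc_ofReal_mul_rpow_sub_one hp0 hb.le, ← ENNReal.ofReal_mul hp0.le]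
    dsimp only
    rw [min_eq_right (ENNReal.ofReal_le_ofReal (by nlinarith [ht.2])),
      ← ENNReal.ofReal_mul (by nlinarith [ht.1]), ← ENNReal.ofReal_mul hp0.le,
      show p - 1 = (p - 2) + 1 by ring, Real.rpow_add_one ht.1.ne']
    ring_nf
  have hfar : ∫⁻ t in Ioi b, min (ENNReal.ofReal (p * b)) (ENNReal.ofReal (p * t))
      * ENNReal.ofReal (p * t ^ (p - 2)) = ENNReal.ofReal (p ^ 2 * b ^ p / (1 - p)) := by
    rw [setLIntegral_congr_fun measurableSet_Ioi
        (g := fun t => ENNReal.ofReal (p * b * p) * ENNReal.ofReal (t ^ (p - 2))) fun t ht => ?_,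
      lintegral_const_mul' _ _ ENNReal.ofReal_ne_top,
      setLIntegral_Ioi_ofReal_rpow (by linarith) hb, ← ENNReal.ofReal_mul (by positivity)]
    · rw [show p - 2 + 1 = p - 1 by ring, Real.rpow_sub_one hb.ne', ← neg_sub 1 p]
      field_simp
    · dsimp only
      rw [min_eq_left (ENNReal.ofReal_le_ofReal (by nlinarith [mem_Ioi.1 ht])),
        ← ENNReal.ofReal_mul (by positivity), ← ENNReal.ofReal_mul (by positivity)]
      ring_nf
  rw [← Ioc_union_Ioi_eq_Ioi hb.le, lintegral_union measurableSet_Ioi Ioc_disjoint_Ioi_same,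
    hnear, hfar, ← ENNReal.ofReal_add (by positivity) (div_nonneg (by positivity) (by linarith))]
  congr 1
  field_simp
  ring

theorem setLIntegral_min_ofReal_mul_rpow_sub_two_le {p : ℝ} (hp0 : 0 < p) (hp1 : p < 1)
    (z : ℝ≥0∞) :
    ∫⁻ t in Ioi 0, min z (ENNReal.ofReal (p * t)) * ENNReal.ofReal (p * t ^ (p - 2))
      ≤ ENNReal.ofReal (p ^ (1 - p) / (1 - p)) * z ^ p := by
  rcases eq_or_ne z ⊤ with rfl | hz
  · rw [ENNReal.top_rpow_of_pos hp0, ENNReal.mul_top (ENNReal.ofReal_pos.2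
      (div_pos (Real.rpow_pos_of_pos hp0 _) (sub_pos.2 hp1))).ne']
    exact le_top
  rcases eq_or_ne z 0 with rfl | hz0
  · simp
  set b := z.toReal / p
  have hb : 0 < b := div_pos (ENNReal.toReal_pos hz0 hz) hp0
  have hzb : z = ENNReal.ofReal (p * b) := by
    rw [mul_div_cancel₀ _ hp0.ne', ENNReal.ofReal_toReal hz]
  rw [hzb, setLIntegral_min_ofReal_mul_rpow_sub_two hp0 hp1 hb,
    ENNReal.ofReal_rpow_of_pos (by positivity), ← ENNReal.ofReal_mul (by positivity),
    Real.mul_rpow hp0.le hb.le, Real.rpow_sub hp0, Real.rpow_one]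
  apply le_of_eq
  congr 1
  field_simp

section

variable {Ω : Type*} {mΩ : MeasurableSpace Ω} (μ : Measure Ω) [SFinite μ] {f : Ω → ℝ≥0∞}

theorem lintegral_rpow_eq_setLIntegral_meas_lt_mul {p : ℝ} (hp : 0 < p) (hf : Measurable f) :
    ∫⁻ ω, f ω ^ p ∂μ
      = ∫⁻ t in Ioi 0, μ {ω | ENNReal.ofReal t < f ω} * ENNReal.ofReal (p * t ^ (p - 1)) := by
  simp_rw [← setLIntegral_ite_ofReal_lt_eq_rpow hp]
  rw [lintegral_lintegral_swap (Measurable.ite (measurableSet_lt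
    (ENNReal.measurable_ofReal.comp measurable_snd) (hf.comp measurable_fst))
    (by fun_prop) measurable_const).aemeasurable]
  congr with t
  rw [mul_comm (μ _), ← lintegral_indicator_const (measurableSet_lt measurable_const hf)]
  simp only [indicator_apply, mem_ofPred_eq]

theorem lintegral_rpow_eq_setLIntegral_meas_le_mul {p : ℝ} (hp : 0 < p) (hf : Measurable f) :
    ∫⁻ ω, f ω ^ p ∂μ
      = ∫⁻ t in Ioi 0, μ {ω | ENNReal.ofReal t ≤ f ω} * ENNReal.ofReal (p * t ^ (p - 1)) := by
  rw [lintegral_rpow_eq_setLIntegral_meas_lt_mul μ hp hf]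
  have hnull : volume ({t : ℝ | μ {ω | ENNReal.ofReal t ≤ f ω} ≠ μ {ω | ENNReal.ofReal t < f ω}}
      ∩ Ioi 0) = 0 := by
    refine measure_mono_null ?_
      (((countable_meas_le_ne_meas_lt μ f).image ENNReal.toReal).measure_zero _)
    rintro t ⟨hne, ht⟩
    exact ⟨ENNReal.ofReal t, hne, ENNReal.toReal_ofReal (le_of_lt ht)⟩
  refine lintegral_congr_ae ((ae_restrict_iff' measurableSet_Ioi).2 ?_)
  filter_upwards [measure_eq_zero_iff_ae_notMem.1 hnull] with t hjump ht
  by_contra hne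
  exact hjump ⟨fun h => hne (by rw [h]), ht⟩

theorem setLIntegral_meas_ofReal_mul_le_mul {p : ℝ} (hp : 0 < p) (hf : Measurable f) :
    ∫⁻ t in Ioi 0, μ {ω | ENNReal.ofReal (p * t) ≤ f ω} * ENNReal.ofReal (p * t ^ (p - 1))
      = ENNReal.ofReal (p ^ (-p)) * ∫⁻ ω, f ω ^ p ∂μ := by
  have hscale (t : ℝ) (z : ℝ≥0∞) :
      ENNReal.ofReal (p * t) ≤ z ↔ ENNReal.ofReal t ≤ z / ENNReal.ofReal p := by
    rw [ENNReal.le_div_iff_mul_le (Or.inl (ENNReal.ofReal_pos.2 hp).ne')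
      (Or.inl ENNReal.ofReal_ne_top), ENNReal.ofReal_mul hp.le, mul_comm]
  simp_rw [hscale]
  rw [← lintegral_rpow_eq_setLIntegral_meas_le_mul μ hp (hf.div_const _),
    ← lintegral_const_mul' _ _ ENNReal.ofReal_ne_top]
  congr with ω
  rw [ENNReal.div_rpow_of_nonneg _ _ hp.le, ENNReal.ofReal_rpow_of_pos hp, div_eq_mul_inv,
    mul_comm, ← ENNReal.ofReal_inv_of_pos (by positivity), Real.rpow_neg hp.le]

theorem setLIntegral_lintegral_min_ofReal_mul_rpow_sub_two_le {p : ℝ} (hp0 : 0 < p) (hp1 : p < 1)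
    (hf : Measurable f) :
    ∫⁻ t in Ioi 0, (∫⁻ ω, min (f ω) (ENNReal.ofReal (p * t)) ∂μ)
        * ENNReal.ofReal (p * t ^ (p - 2))
      ≤ ENNReal.ofReal (p ^ (1 - p) / (1 - p)) * ∫⁻ ω, f ω ^ p ∂μ := by
  simp_rw [← lintegral_mul_const' _ _ ENNReal.ofReal_ne_top]
  rw [lintegral_lintegral_swap (by fun_prop), ← lintegral_const_mul' _ _ ENNReal.ofReal_ne_top]
  exact lintegral_mono fun ω => setLIntegral_min_ofReal_mul_rpow_sub_two_le hp0 hp1 (f ω)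

end

/-- If `Y`, `Z` are non-negative random variables with
`P(Y > c) ≤ c⁻¹ E[Z ∧ d] + P(Z ≥ d)` for all `c, d > 0`, then for `p ∈ (0,1)`,
`E[Y^p] ≤ (p^(-p)/(1-p)) E[Z^p]`. -/
theorem lenglart_tail_to_moment {Ω : Type*} {mΩ : MeasurableSpace Ω} (μ : Measure Ω)
    [IsProbabilityMeasure μ] (Y Z : Ω → ℝ≥0∞) (hY : Measurable Y) (hZ : Measurable Z)
    (h : ∀ c d : ℝ, 0 < c → 0 < d →
      μ {ω | ENNReal.ofReal c < Y ω}
        ≤ (ENNReal.ofReal c)⁻¹ * ∫⁻ ω, min (Z ω) (ENNReal.ofReal d) ∂μ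
          + μ {ω | ENNReal.ofReal d ≤ Z ω})
    (p : ℝ) (hp : p ∈ Set.Ioo (0:ℝ) 1) :
    ∫⁻ ω, Y ω ^ p ∂μ ≤ ENNReal.ofReal (p ^ (-p) / (1 - p)) * ∫⁻ ω, Z ω ^ p ∂μ := by
  obtain ⟨hp0, hp1⟩ := hp
  calc ∫⁻ ω, Y ω ^ p ∂μ
      = ∫⁻ t in Ioi 0, μ {ω | ENNReal.ofReal t < Y ω} * ENNReal.ofReal (p * t ^ (p - 1)) :=
        lintegral_rpow_eq_setLIntegral_meas_lt_mul μ hp0 hY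
    _ ≤ ∫⁻ t in Ioi 0, ((∫⁻ ω, min (Z ω) (ENNReal.ofReal (p * t)) ∂μ)
            * ENNReal.ofReal (p * t ^ (p - 2))
          + μ {ω | ENNReal.ofReal (p * t) ≤ Z ω} * ENNReal.ofReal (p * t ^ (p - 1))) := by
        refine setLIntegral_mono' measurableSet_Ioi fun t ht => ?_
        rw [← ofReal_inv_mul_ofReal_mul_rpow_sub_one ht, mul_left_comm, ← mul_assoc,
          ← add_mul]
        gcongr
        exact h t (p * t) ht (mul_pos hp0 ht)
    _ = (∫⁻ t in Ioi 0, (∫⁻ ω, min (Z ω) (ENNReal.ofReal (p * t)) ∂μ)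
            * ENNReal.ofReal (p * t ^ (p - 2)))
          + ∫⁻ t in Ioi 0, μ {ω | ENNReal.ofReal (p * t) ≤ Z ω}
            * ENNReal.ofReal (p * t ^ (p - 1)) :=
        lintegral_add_left ((Measurable.lintegral_prod_right'
          (f := fun q : ℝ × Ω => min (Z q.2) (ENNReal.ofReal (p * q.1))) (by fun_prop)).mul
          (by fun_prop)) _
    _ ≤ ENNReal.ofReal (p ^ (1 - p) / (1 - p)) * ∫⁻ ω, Z ω ^ p ∂μ
          + ENNReal.ofReal (p ^ (-p)) * ∫⁻ ω, Z ω ^ p ∂μ :=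
        add_le_add (setLIntegral_lintegral_min_ofReal_mul_rpow_sub_two_le μ hp0 hp1 hZ)
          (setLIntegral_meas_ofReal_mul_le_mul μ hp0 hZ).le
    _ = ENNReal.ofReal (p ^ (-p) / (1 - p)) * ∫⁻ ω, Z ω ^ p ∂μ := by
        rw [← add_mul, ← ENNReal.ofReal_add (div_nonneg (by positivity) (sub_pos.2 hp1).le)
          (by positivity), rpow_one_sub_div_add_rpow_neg hp0 hp1.ne]
end

section
/- Counterexample random variable moments: For q, α ∈ (0,1), let S_{q,α} take the value (1-q)^{1-1/α} q^{-1} with probability q and the value −(1-q)^{-1/α} with probability 1−q. Then E[S_{q,α}] = 0, E[((S_{q,α})_-)^α] = 1, and for p ∈ (0,1), E[((S_{q,α})_+)^p] = (1-q)^{p(1-1/α)} q^{1-p}, which tends to +∞ as q → 1. -/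
/-!
`S` takes only the two values `a = (1-q)^(1-1/α)/q` and `b = -(1-q)^(-1/α)`, so every moment
`E[f(S)]` equals `q f(a) + (1-q) f(b)` and reduces to `rpow` algebra:
`q a = (1-q)^(1-1/α) = (1-q)|b|` gives the zero mean, and `(1-q) |b|^α = 1`.
The positive-part moment carries the factor `(1-q)^(p(1-1/α))`, whose exponent is negative
since `α < 1`, hence the blow-up as `q → 1⁻`.
-/

open MeasureTheory Set Filter Topology

theorem integral_comp_eq_of_forall_eq_or_eq {Ω E F : Type*} {mΩ : MeasurableSpace Ω}
    [MeasurableSpace E] [MeasurableSingletonClass E] [NormedAddCommGroup F] [NormedSpace ℝ F]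
    [CompleteSpace F]
    (μ : Measure Ω) [IsFiniteMeasure μ] {S : Ω → E} (hS : Measurable S) (f : E → F) {a b : E}
    (hab : a ≠ b) (hvals : ∀ ω, S ω = a ∨ S ω = b) :
    ∫ ω, f (S ω) ∂μ = μ.real {ω | S ω = a} • f a + μ.real {ω | S ω = b} • f b := by
  have hA : MeasurableSet {ω | S ω = a} := hS (measurableSet_singleton a)
  have hB : MeasurableSet {ω | S ω = b} := hS (measurableSet_singleton b)
  have hsplit : (fun ω => f (S ω)) =
      {ω | S ω = a}.indicator (fun _ => f a) + {ω | S ω = b}.indicator (fun _ => f b) := by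
    ext ω
    rcases hvals ω with h | h <;> simp [h, hab, hab.symm]
  rw [hsplit, integral_add' ((integrable_const _).indicator hA) ((integrable_const _).indicator hB),
    integral_indicator_const _ hA, integral_indicator_const _ hB]

theorem tendsto_one_sub_nhdsLT_one : Tendsto (fun x : ℝ => 1 - x) (𝓝[<] 1) (𝓝[>] 0) :=
  tendsto_nhdsWithin_of_tendsto_nhds_of_eventually_within _
    (((continuous_const.sub continuous_id).tendsto' 1 0 (sub_self 1)).mono_left
      nhdsWithin_le_nhds)
    (eventually_nhdsWithin_of_forall fun _ hx => sub_pos.2 (mem_Iio.1 hx))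

theorem tendsto_one_sub_rpow_mul_rpow_nhdsLT_one {c : ℝ} (hc : c < 0) (d : ℝ) :
    Tendsto (fun x : ℝ => (1 - x) ^ c * x ^ d) (𝓝[<] 1) atTop := by
  have hpow : Tendsto (fun x : ℝ => x ^ d) (𝓝[<] 1) (𝓝 1) := by
    simpa using (Real.continuousAt_rpow_const 1 d (Or.inl one_ne_zero)).tendsto.mono_left
      nhdsWithin_le_nhds
  exact ((tendsto_rpow_neg_nhdsGT_zero hc).comp tendsto_one_sub_nhdsLT_one).atTop_mul_pos
    one_pos hpow

section TwoPointMoments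

variable {q α : ℝ}

theorem two_point_mean (hq : q ≠ 0) (ht : 0 < 1 - q) :
    q * ((1 - q) ^ (1 - 1 / α) / q) + (1 - q) * -(1 - q) ^ (-(1 / α)) = 0 := by
  rw [Real.rpow_sub ht, Real.rpow_neg ht.le, Real.rpow_one]
  field_simp
  simp

theorem two_point_negPart_rpow_moment (hq : 0 < q) (ht : 0 < 1 - q) (hα : α ≠ 0) :
    q * max (-((1 - q) ^ (1 - 1 / α) / q)) 0 ^ α
      + (1 - q) * max (- -(1 - q) ^ (-(1 / α))) 0 ^ α = 1 := by
  have hupper : 0 ≤ (1 - q) ^ (1 - 1 / α) / q := by positivity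
  rw [max_eq_right (neg_nonpos.2 hupper), Real.zero_rpow hα, neg_neg,
    max_eq_left (by positivity), ← Real.rpow_mul ht.le, neg_mul, one_div_mul_cancel hα,
    Real.rpow_neg_one, mul_zero, zero_add, mul_inv_cancel₀ ht.ne']

theorem two_point_posPart_rpow_moment (hq : 0 < q) (ht : 0 < 1 - q) {p : ℝ} (hp : p ≠ 0) :
    q * max ((1 - q) ^ (1 - 1 / α) / q) 0 ^ p + (1 - q) * max (-(1 - q) ^ (-(1 / α))) 0 ^ p
      = (1 - q) ^ (p * (1 - 1 / α)) * q ^ (1 - p) := by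
  have hlower : -(1 - q) ^ (-(1 / α)) ≤ 0 := neg_nonpos.2 (by positivity)
  rw [max_eq_left (by positivity), max_eq_right hlower, Real.zero_rpow hp, mul_zero, add_zero,
    Real.div_rpow (by positivity) hq.le, ← Real.rpow_mul ht.le, mul_comm _ p, Real.rpow_sub hq,
    Real.rpow_one]
  ring

end TwoPointMoments

/-- Counterexample random variable moments: for `q, α ∈ (0,1)`, if `S` takes the value
`(1-q)^(1-1/α) q⁻¹` with probability `q` and `-(1-q)^(-1/α)` with probability `1-q`, then
`E[S] = 0`, `E[(S₋)^α] = 1`, and for `p ∈ (0,1)`,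
`E[(S₊)^p] = (1-q)^(p(1-1/α)) q^(1-p)`, which tends to `+∞` as `q → 1⁻`. -/
theorem counterexample_moments {Ω : Type*} {mΩ : MeasurableSpace Ω} (μ : Measure Ω)
    [IsProbabilityMeasure μ] (q α : ℝ) (hq : q ∈ Set.Ioo (0:ℝ) 1)
    (hα : α ∈ Set.Ioo (0:ℝ) 1) (S : Ω → ℝ) (hS : Measurable S)
    (hvals : ∀ ω, S ω = (1 - q) ^ (1 - 1 / α) / q ∨ S ω = -((1 - q) ^ (-(1 / α))))
    (hplus : μ {ω | S ω = (1 - q) ^ (1 - 1 / α) / q} = ENNReal.ofReal q)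
    (hminus : μ {ω | S ω = -((1 - q) ^ (-(1 / α)))} = ENNReal.ofReal (1 - q)) :
    (∫ ω, S ω ∂μ = 0) ∧
    (∫ ω, (max (-S ω) 0) ^ α ∂μ = 1) ∧
    (∀ p ∈ Set.Ioo (0:ℝ) 1,
      ∫ ω, (max (S ω) 0) ^ p ∂μ = (1 - q) ^ (p * (1 - 1 / α)) * q ^ (1 - p)) ∧
    (∀ p ∈ Set.Ioo (0:ℝ) 1,
      Tendsto (fun q' : ℝ => (1 - q') ^ (p * (1 - 1 / α)) * q' ^ (1 - p))
        (nhdsWithin 1 (Set.Iio 1)) atTop) := by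
  obtain ⟨hq0, hq1⟩ := hq
  obtain ⟨hα0, hα1⟩ := hα
  have ht : 0 < 1 - q := sub_pos.2 hq1
  have hne : (1 - q) ^ (1 - 1 / α) / q ≠ -((1 - q) ^ (-(1 / α))) :=
    ((neg_neg_of_pos (by positivity)).trans (by positivity)).ne'
  have hE (f : ℝ → ℝ) :
      ∫ ω, f (S ω) ∂μ =
        q * f ((1 - q) ^ (1 - 1 / α) / q) + (1 - q) * f (-(1 - q) ^ (-(1 / α))) := by
    rw [integral_comp_eq_of_forall_eq_or_eq μ hS f hne hvals, measureReal_def, measureReal_def,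
      hplus, hminus, ENNReal.toReal_ofReal hq0.le, ENNReal.toReal_ofReal ht.le, smul_eq_mul,
      smul_eq_mul]
  refine ⟨?_, ?_, fun p hp => ?_, fun p hp => ?_⟩
  · exact (hE id).trans (two_point_mean hq0.ne' ht)
  · exact (hE fun x => max (-x) 0 ^ α).trans (two_point_negPart_rpow_moment hq0 ht hα0.ne')
  · exact (hE fun x => max x 0 ^ p).trans (two_point_posPart_rpow_moment hq0 ht hp.1.ne')
  · have hexp : 1 - 1 / α < 0 := sub_neg.2 (one_lt_one_div hα0 hα1)
    exact tendsto_one_sub_rpow_mul_rpow_nhdsLT_one (mul_neg_of_pos_of_neg hp.1 hexp) _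
end

section
/- Tail-to-moment conversion: if Y, G are non-negative random variables with P(Y > c) ≤ (1/c) E[G ∧ λc] + P(G ≥ λc) for all c > 0 and a fixed λ > 0, then E[Y^p] ≤ (λ^{1-p}/(1-p) + λ^{-p})·E[G^p] for every p ∈ (0,1). -/
open MeasureTheory Set
open scoped ENNReal

/-!
By the layer cake formula, `E[Y^p] = ∫₀^∞ P(Y > c^(1/p)) dc`, and the hypothesis at `c^(1/p)`
splits the integrand in two. After Tonelli the truncated-mean part is
`E[∫₀^∞ c^(-1/p) min(G, λ c^(1/p)) dc]`; bounding the integrand by `λ` below the cut-off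
`(G/λ)^p` and by `G c^(-1/p)` above it gives `λ^(1-p) G^p / (1-p)`. The tail part is
`∫₀^∞ P((G/λ)^p ≥ c) dc = λ^(-p) E[G^p]`, by the layer cake formula again.
-/

theorem volume_restrict_Ioi_setOf_ofReal_lt (x : ℝ≥0∞) :
    volume.restrict (Ioi (0 : ℝ)) {t | ENNReal.ofReal t < x} = x := by
  rw [Measure.restrict_apply' measurableSet_Ioi]
  induction x with
  | top => simp
  | coe r =>
    have : {t : ℝ | ENNReal.ofReal t < r} ∩ Ioi 0 = Ioo 0 (r : ℝ) := by
      ext t; simp +contextual [and_comm, ENNReal.ofReal_lt_iff_lt_toReal, le_of_lt]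
    rw [this, Real.volume_Ioo]; simp

theorem volume_restrict_Ioi_setOf_ofReal_le (x : ℝ≥0∞) :
    volume.restrict (Ioi (0 : ℝ)) {t | ENNReal.ofReal t ≤ x} = x := by
  rw [Measure.restrict_apply' measurableSet_Ioi]
  induction x with
  | top => simp
  | coe r =>
    have : {t : ℝ | ENNReal.ofReal t ≤ r} ∩ Ioi 0 = Ioc 0 (r : ℝ) := by
      ext t; simp +contextual [and_comm, ENNReal.ofReal_le_iff_le_toReal]
    rw [this, Real.volume_Ioc]; simp

theorem lintegral_eq_setLIntegral_Ioi_measure_ofReal_lt {Ω : Type*} {mΩ : MeasurableSpace Ω}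
    (μ : Measure Ω) [SFinite μ] {f : Ω → ℝ≥0∞} (hf : Measurable f) :
    ∫⁻ ω, f ω ∂μ = ∫⁻ t in Ioi 0, μ {ω | ENNReal.ofReal t < f ω} := by
  have hs : MeasurableSet {q : ℝ × Ω | ENNReal.ofReal q.1 < f q.2} :=
    measurableSet_lt (by fun_prop) (by fun_prop)
  have key := (Measure.prod_apply (μ := volume.restrict (Ioi 0)) (ν := μ) hs).symm.trans
    (Measure.prod_apply_symm hs)
  simpa only [preimage_ofPred_eq, volume_restrict_Ioi_setOf_ofReal_lt] using key.symm

theorem lintegral_eq_setLIntegral_Ioi_measure_ofReal_le {Ω : Type*} {mΩ : MeasurableSpace Ω}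
    (μ : Measure Ω) [SFinite μ] {f : Ω → ℝ≥0∞} (hf : Measurable f) :
    ∫⁻ ω, f ω ∂μ = ∫⁻ t in Ioi 0, μ {ω | ENNReal.ofReal t ≤ f ω} := by
  have hs : MeasurableSet {q : ℝ × Ω | ENNReal.ofReal q.1 ≤ f q.2} :=
    measurableSet_le (by fun_prop) (by fun_prop)
  have key := (Measure.prod_apply (μ := volume.restrict (Ioi 0)) (ν := μ) hs).symm.trans
    (Measure.prod_apply_symm hs)
  simpa only [preimage_ofPred_eq, volume_restrict_Ioi_setOf_ofReal_le] using key.symm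

theorem setLIntegral_Ioi_ofReal_rpow_of_lt {a c : ℝ} (ha : a < -1) (hc : 0 < c) :
    ∫⁻ t in Ioi c, ENNReal.ofReal (t ^ a) = ENNReal.ofReal (-c ^ (a + 1) / (a + 1)) := by
  rw [← integral_Ioi_rpow_of_lt ha hc, ofReal_integral_eq_lintegral_ofReal
    (integrableOn_Ioi_rpow_of_lt ha hc)]
  filter_upwards [ae_restrict_mem measurableSet_Ioi] with t ht
  exact Real.rpow_nonneg (hc.trans ht).le a

theorem setLIntegral_Ioi_inv_mul_min_le {l p T : ℝ} (hl : 0 < l) (hp0 : 0 < p) (hp1 : p < 1)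
    (hT : 0 < T) (g : ℝ≥0∞) :
    ∫⁻ c in Ioi 0, (ENNReal.ofReal (c ^ p⁻¹))⁻¹ * min g (ENNReal.ofReal (l * c ^ p⁻¹))
      ≤ ENNReal.ofReal (l * T) + g * ENNReal.ofReal (T ^ (1 - p⁻¹) / (p⁻¹ - 1)) := by
  have hexp : -p⁻¹ < -1 := neg_lt_neg ((one_lt_inv₀ hp0).2 hp1)
  rw [← Ioc_union_Ioi_eq_Ioi hT.le, lintegral_union measurableSet_Ioi (Ioc_disjoint_Ioi le_rfl)]
  gcongr ?_ + ?_
  · calc _ ≤ ∫⁻ _ in Ioc 0 T, ENNReal.ofReal l := by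
          refine setLIntegral_mono' measurableSet_Ioc fun c hc => ?_
          have hx : 0 < c ^ p⁻¹ := Real.rpow_pos_of_pos hc.1 _
          calc _ ≤ (ENNReal.ofReal (c ^ p⁻¹))⁻¹ * ENNReal.ofReal (l * c ^ p⁻¹) := by
                gcongr; exact min_le_right _ _
            _ = ENNReal.ofReal l := by
                rw [mul_comm l, ENNReal.ofReal_mul hx.le, ENNReal.inv_mul_cancel_left
                  (ENNReal.ofReal_pos.2 hx).ne' ENNReal.ofReal_ne_top]
      _ = ENNReal.ofReal (l * T) := by simp [ENNReal.ofReal_mul hl.le]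
  · calc _ ≤ ∫⁻ c in Ioi T, g * ENNReal.ofReal (c ^ (-p⁻¹)) := by
          refine setLIntegral_mono' measurableSet_Ioi fun c hc => ?_
          have hc0 : 0 < c := hT.trans hc
          rw [mul_comm g, Real.rpow_neg hc0.le,
            ← ENNReal.ofReal_inv_of_pos (Real.rpow_pos_of_pos hc0 _)]
          gcongr
          exact min_le_left _ _
      _ = g * ENNReal.ofReal (T ^ (1 - p⁻¹) / (p⁻¹ - 1)) := by
          rw [lintegral_const_mul _ (by fun_prop), setLIntegral_Ioi_ofReal_rpow_of_lt hexp hT,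
            neg_add_eq_sub, ← neg_div_neg_eq, neg_neg, neg_sub]

theorem setLIntegral_Ioi_inv_mul_min_le_rpow {l p : ℝ} (hl : 0 < l) (hp0 : 0 < p) (hp1 : p < 1)
    (g : ℝ≥0∞) :
    ∫⁻ c in Ioi 0, (ENNReal.ofReal (c ^ p⁻¹))⁻¹ * min g (ENNReal.ofReal (l * c ^ p⁻¹))
      ≤ ENNReal.ofReal (l ^ (1 - p) / (1 - p)) * g ^ p := by
  have hp_inv : 1 < p⁻¹ := (one_lt_inv₀ hp0).2 hp1
  induction g with
  | top =>
    rw [ENNReal.top_rpow_of_pos hp0, ENNReal.mul_top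
      (ENNReal.ofReal_pos.2 (div_pos (by positivity) (by linarith))).ne']
    exact le_top
  | coe r =>
    rcases eq_zero_or_pos r with rfl | hr
    · simp
    obtain ⟨s, hs, hr_eq⟩ : ∃ s : ℝ, 0 < s ∧ (r : ℝ) = l * s :=
      ⟨r / l, by positivity, by field_simp⟩
    refine (setLIntegral_Ioi_inv_mul_min_le hl hp0 hp1 (Real.rpow_pos_of_pos hs p) r).trans_eq ?_
    rw [← ENNReal.ofReal_coe_nnreal, ENNReal.ofReal_rpow_of_nonneg r.coe_nonneg hp0.le,
      ← ENNReal.ofReal_mul r.coe_nonneg, ← ENNReal.ofReal_add (by positivity)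
        (mul_nonneg r.coe_nonneg (div_nonneg (by positivity) (sub_pos.2 hp_inv).le)),
      ← ENNReal.ofReal_mul (div_nonneg (by positivity) (by linarith))]
    congr 1
    have hexp : p * (1 - p⁻¹) = p - 1 := by field_simp
    have hl_pow : l ^ (1 - p) * l ^ p = l := by rw [← Real.rpow_add hl]; simp
    have hp1' : 1 - p ≠ 0 := by linarith
    rw [← Real.rpow_mul hs.le, hexp, Real.rpow_sub_one hs.ne', hr_eq, Real.mul_rpow hl.le hs.le]
    field_simp
    rw [hl_pow]
    ring

theorem setLIntegral_Ioi_measure_ofReal_mul_rpow_inv_le_eq {Ω : Type*} {mΩ : MeasurableSpace Ω}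
    (μ : Measure Ω) [SFinite μ] {H : Ω → ℝ≥0∞} (hH : Measurable H) {a q : ℝ} (ha : 0 < a)
    (hq : 0 < q) :
    ∫⁻ c in Ioi 0, μ {ω | ENNReal.ofReal (a * c ^ q⁻¹) ≤ H ω}
      = ENNReal.ofReal (a ^ (-q)) * ∫⁻ ω, H ω ^ q ∂μ := by
  have hset : ∀ c ∈ Ioi (0 : ℝ), μ {ω | ENNReal.ofReal (a * c ^ q⁻¹) ≤ H ω}
      = μ {ω | ENNReal.ofReal c ≤ (H ω / ENNReal.ofReal a) ^ q} := by
    intro c hc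
    simp_rw [← ENNReal.rpow_inv_le_iff hq, ENNReal.ofReal_mul ha.le,
      ← ENNReal.ofReal_rpow_of_nonneg (le_of_lt hc) (inv_nonneg.2 hq.le),
      mul_comm (ENNReal.ofReal a), ENNReal.le_div_iff_mul_le
        (Or.inl (ENNReal.ofReal_pos.2 ha).ne') (Or.inl ENNReal.ofReal_ne_top)]
  rw [setLIntegral_congr_fun measurableSet_Ioi hset,
    ← lintegral_eq_setLIntegral_Ioi_measure_ofReal_le μ (by fun_prop),
    ← lintegral_const_mul' _ _ ENNReal.ofReal_ne_top]
  congr 1 with ω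
  rw [ENNReal.div_rpow_of_nonneg _ _ hq.le, div_eq_mul_inv, mul_comm, ← ENNReal.rpow_neg,
    ENNReal.ofReal_rpow_of_pos ha]

/-- Tail-to-moment conversion: if `Y, G` are non-negative random variables with
`P(Y > c) ≤ c⁻¹ E[G ∧ λc] + P(G ≥ λc)` for all `c > 0` and a fixed `λ > 0`, then
`E[Y^p] ≤ (λ^(1-p)/(1-p) + λ^(-p)) E[G^p]` for every `p ∈ (0,1)`. -/
theorem tail_to_moment_fixed_lambda {Ω : Type*} {mΩ : MeasurableSpace Ω} (μ : Measure Ω)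
    [IsProbabilityMeasure μ] (Y G : Ω → ℝ≥0∞) (hY : Measurable Y) (hG : Measurable G)
    (l : ℝ) (hl : 0 < l)
    (h : ∀ c : ℝ, 0 < c →
      μ {ω | ENNReal.ofReal c < Y ω}
        ≤ (ENNReal.ofReal c)⁻¹ * ∫⁻ ω, min (G ω) (ENNReal.ofReal (l * c)) ∂μ
          + μ {ω | ENNReal.ofReal (l * c) ≤ G ω})
    (p : ℝ) (hp : p ∈ Set.Ioo (0:ℝ) 1) :
    ∫⁻ ω, Y ω ^ p ∂μ
      ≤ ENNReal.ofReal (l ^ (1 - p) / (1 - p) + l ^ (-p)) * ∫⁻ ω, G ω ^ p ∂μ := by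
  obtain ⟨hp0, hp1⟩ := hp
  set F : ℝ → Ω → ℝ≥0∞ := fun c ω =>
    (ENNReal.ofReal (c ^ p⁻¹))⁻¹ * min (G ω) (ENNReal.ofReal (l * c ^ p⁻¹)) with hF_def
  have hF : Measurable (Function.uncurry F) := by fun_prop
  have tail : ∀ c ∈ Ioi (0 : ℝ), μ {ω | ENNReal.ofReal c < Y ω ^ p}
      ≤ ∫⁻ ω, F c ω ∂μ + μ {ω | ENNReal.ofReal (l * c ^ p⁻¹) ≤ G ω} := by
    intro c hc
    have hx : 0 < c ^ p⁻¹ := Real.rpow_pos_of_pos hc _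
    simp_rw [← ENNReal.rpow_inv_lt_iff hp0,
      ENNReal.ofReal_rpow_of_nonneg (le_of_lt hc) (inv_nonneg.2 hp0.le), hF_def]
    rw [lintegral_const_mul' _ _ (ENNReal.inv_ne_top.2 (ENNReal.ofReal_pos.2 hx).ne')]
    exact h _ hx
  calc ∫⁻ ω, Y ω ^ p ∂μ = ∫⁻ c in Ioi 0, μ {ω | ENNReal.ofReal c < Y ω ^ p} :=
        lintegral_eq_setLIntegral_Ioi_measure_ofReal_lt μ (by fun_prop)
    _ ≤ ∫⁻ c in Ioi 0, (∫⁻ ω, F c ω ∂μ + μ {ω | ENNReal.ofReal (l * c ^ p⁻¹) ≤ G ω}) :=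
        setLIntegral_mono' measurableSet_Ioi tail
    _ = ∫⁻ ω, (∫⁻ c in Ioi 0, F c ω) ∂μ
          + ∫⁻ c in Ioi 0, μ {ω | ENNReal.ofReal (l * c ^ p⁻¹) ≤ G ω} := by
        have hF_inner : Measurable fun c => ∫⁻ ω, F c ω ∂μ := hF.lintegral_prod_right'
        rw [lintegral_add_left hF_inner, lintegral_lintegral_swap hF.aemeasurable]
    _ ≤ ∫⁻ ω, ENNReal.ofReal (l ^ (1 - p) / (1 - p)) * G ω ^ p ∂μ
          + ENNReal.ofReal (l ^ (-p)) * ∫⁻ ω, G ω ^ p ∂μ := by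
        rw [setLIntegral_Ioi_measure_ofReal_mul_rpow_inv_le_eq μ hG hl hp0]
        gcongr with ω
        exact setLIntegral_Ioi_inv_mul_min_le_rpow hl hp0 hp1 (G ω)
    _ = ENNReal.ofReal (l ^ (1 - p) / (1 - p) + l ^ (-p)) * ∫⁻ ω, G ω ^ p ∂μ := by
        rw [lintegral_const_mul' _ _ ENNReal.ofReal_ne_top,
          ENNReal.ofReal_add (div_nonneg (by positivity) (by linarith)) (by positivity), add_mul]
end
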